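/- arXiv:1311.1098 — 3 statements merged into one kernel-verified Lean document; each statement's English description precedes it below -/
import Mathlib

section
/- In the Composite Mirror Prox setting with Lipschitz field (M = 0), the condition γ_τ ≤ 1/L guarantees δ_τ := γ_τ⟨F_u(u'_τ)−F_u(u_τ), u'_τ−u_{τ+1}⟩ − V_{u'_τ}(u_{τ+1}) − V_{u_τ}(u'_τ) ≤ 0. More generally, if 0 < γ_τ ≤ 1/(√2 L) then δ_τ ≤ γ_τ²M². -/
/-!
Write `a = ‖u'_τ - u_τ‖` and `b = ‖u'_τ - u_{τ+1}‖`. The duality pairing, the Lipschitz bound and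
the strong convexity of the distance-generating function give
`δ_τ ≤ (γ L a + γ M) b - a²/2 - b²/2`, and the right-hand side is controlled by Young's inequality:
with `γ L ≤ 1` and `M = 0` it is at most `0`, and with `√2 γ L ≤ 1` at most `γ² M²`.
-/

local notation "⟪" x ", " y "⟫" => @inner ℝ _ _ x y

theorem mul_mul_le_half_sq_add_half_sq {a b c : ℝ} (ha : 0 ≤ a) (hb : 0 ≤ b) (hc : c ≤ 1) :
    c * a * b ≤ a ^ 2 / 2 + b ^ 2 / 2 := by
  nlinarith [sq_nonneg (a - b), mul_le_mul_of_nonneg_right hc (mul_nonneg ha hb)]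

theorem add_mul_le_half_sq_add_half_sq_add_sq {a b c m : ℝ} (ha : 0 ≤ a) (hb : 0 ≤ b)
    (hc : √2 * c ≤ 1) : (c * a + m) * b ≤ a ^ 2 / 2 + b ^ 2 / 2 + m ^ 2 := by
  have hs : √2 ^ 2 = 2 := Real.sq_sqrt zero_le_two
  -- `(√2 a - b)² ≥ 0` absorbs the Lipschitz part and `(b/2 - m)² ≥ 0` the remainder.
  have hlip : c * a * b ≤ a ^ 2 / 2 + b ^ 2 / 4 := by
    nlinarith [sq_nonneg (√2 * a - b), mul_le_mul_of_nonneg_right hc (mul_nonneg ha hb),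
      mul_nonneg (mul_nonneg ha hb) (Real.sqrt_nonneg 2)]
  nlinarith [sq_nonneg (b / 2 - m)]

theorem mirrorProx_residual_le {E : Type*} [AddCommGroup E] [Inner ℝ E] {U : Set E}
    {nrm dnrm : E → ℝ} (hsymm : ∀ a, nrm (-a) = nrm a)
    (hpair : ∀ f a : E, ⟪f, a⟫ ≤ dnrm f * nrm a) {V : E → E → ℝ}
    (hVlb : ∀ u ∈ U, ∀ w ∈ U, (1/2) * (nrm (w - u))^2 ≤ V u w) {F : E → E} {L M : ℝ}
    (hLip : ∀ u ∈ U, ∀ u' ∈ U, dnrm (F u - F u') ≤ L * nrm (u - u') + M)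
    {u u' u₁ : E} (hu : u ∈ U) (hu' : u' ∈ U) (hu₁ : u₁ ∈ U) (hb : 0 ≤ nrm (u' - u₁))
    {γ : ℝ} (hγ : 0 ≤ γ) :
    γ * ⟪F u' - F u, u' - u₁⟫ - V u' u₁ - V u u' ≤
      (γ * L * nrm (u' - u) + γ * M) * nrm (u' - u₁)
        - nrm (u' - u) ^ 2 / 2 - nrm (u' - u₁) ^ 2 / 2 := by
  have hdual : ⟪F u' - F u, u' - u₁⟫ ≤ (L * nrm (u' - u) + M) * nrm (u' - u₁) :=
    (hpair _ _).trans (mul_le_mul_of_nonneg_right (hLip u' hu' u hu) hb)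
  have hV₁ := hVlb u' hu' u₁ hu₁
  rw [← neg_sub, hsymm] at hV₁
  have hV₂ := hVlb u hu u' hu'
  nlinarith [mul_le_mul_of_nonneg_left hdual hγ]

theorem stmt9_general {Eu : Type*}
    [NormedAddCommGroup Eu] [InnerProductSpace ℝ Eu]
    (U : Set Eu) (nrm dnrm : Eu → ℝ)
    (hnrm : ∀ a, 0 ≤ nrm a) (hsymm : ∀ a, nrm (-a) = nrm a)
    (hpair : ∀ f a : Eu, ⟪f, a⟫ ≤ dnrm f * nrm a)
    (V : Eu → Eu → ℝ)
    (hVlb : ∀ u ∈ U, ∀ w ∈ U, (1/2) * (nrm (w - u))^2 ≤ V u w)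
    (Fu : Eu → Eu) (L M : ℝ) (hL : 0 < L)
    (hLip : ∀ u ∈ U, ∀ u' ∈ U, dnrm (Fu u - Fu u') ≤ L * nrm (u - u') + M)
    (uτ u'τ uτ1 : Eu) (hu : uτ ∈ U) (hu' : u'τ ∈ U) (hu1 : uτ1 ∈ U)
    (γ : ℝ) (hγ : 0 < γ) :
    (M = 0 → γ ≤ 1/L →
      γ * ⟪Fu u'τ - Fu uτ, u'τ - uτ1⟫ - V u'τ uτ1 - V uτ u'τ ≤ 0) ∧
    (γ ≤ 1/(Real.sqrt 2 * L) →
      γ * ⟪Fu u'τ - Fu uτ, u'τ - uτ1⟫ - V u'τ uτ1 - V uτ u'τ ≤ γ^2 * M^2) := by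
  have hres := mirrorProx_residual_le hsymm hpair hVlb hLip hu hu' hu1 (hnrm _) hγ.le
  constructor
  · rintro rfl hγL
    have := mul_mul_le_half_sq_add_half_sq (hnrm (u'τ - uτ)) (hnrm (u'τ - uτ1))
      ((le_div_iff₀ hL).mp hγL)
    linarith
  · intro hγL
    have hγL' : √2 * (γ * L) ≤ 1 := by
      rw [le_div_iff₀ (by positivity)] at hγL
      linarith
    have := add_mul_le_half_sq_add_half_sq_add_sq (m := γ * M) (hnrm (u'τ - uτ))
      (hnrm (u'τ - uτ1)) hγL'
    linarith

theorem stmt9 {Eu : Type*}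
    [NormedAddCommGroup Eu] [InnerProductSpace ℝ Eu] [FiniteDimensional ℝ Eu]
    (U : Set Eu) (nrm dnrm : Eu → ℝ)
    (hnrm : ∀ a, 0 ≤ nrm a) (hsymm : ∀ a, nrm (-a) = nrm a)
    (hpair : ∀ f a : Eu, ⟪f, a⟫ ≤ dnrm f * nrm a)
    (V : Eu → Eu → ℝ)
    (hVlb : ∀ u ∈ U, ∀ w ∈ U, (1/2) * (nrm (w - u))^2 ≤ V u w)
    (Fu : Eu → Eu) (L M : ℝ) (hL : 0 < L) (hM : 0 ≤ M)
    (hLip : ∀ u ∈ U, ∀ u' ∈ U, dnrm (Fu u - Fu u') ≤ L * nrm (u - u') + M)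
    (uτ u'τ uτ1 : Eu) (hu : uτ ∈ U) (hu' : u'τ ∈ U) (hu1 : uτ1 ∈ U)
    (γ : ℝ) (hγ : 0 < γ) :
    (M = 0 → γ ≤ 1/L →
      γ * ⟪Fu u'τ - Fu uτ, u'τ - uτ1⟫ - V u'τ uτ1 - V uτ u'τ ≤ 0) ∧
    (γ ≤ 1/(Real.sqrt 2 * L) →
      γ * ⟪Fu u'τ - Fu uτ, u'τ - uτ1⟫ - V u'τ uτ1 - V uτ u'τ ≤ γ^2 * M^2) :=
  stmt9_general U nrm dnrm hnrm hsymm hpair V hVlb Fu L M hL hLip uτ u'τ uτ1 hu hu' hu1 γ hγ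
end

section
/- (Near-optimal near-feasible solution from the gap) In the two-objective scheme for min_{y∈Y}{f(y): g(y) ≤ 0} with f, g convex on a convex compact set Y, suppose at step t of stage s one has a finite set Q ⊂ ℝ² such that for each (p,q) ∈ Q there is y_{pq} ∈ Y with f(y_{pq}) ≤ p and g(y_{pq}) ≤ q, and a valid lower bound L̲ ≤ Opt. Define Gap = max_{α∈[0,1]} min_{(p,q)∈Q} [α(p − L̲) + (1−α)q]. Then there exist convex weights λ_{pq} ≥ 0 summing to 1 such that ŷ = Σ λ_{pq} y_{pq} ∈ Y satisfies f(ŷ) ≤ Opt + Gap and g(ŷ) ≤ Gap. -/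
/-!
Mixed strategies `λ` on `Q` and weights `α ∈ [0, 1]` play a game with payoff
`α (p - L̲) + (1 - α) q`, which is affine in both players. By Sion's minimax theorem, applied to
the convex hull of the shifted points `(p - L̲, q)`, it has a saddle point `(λ*, α*)`. Testing the
saddle inequality against `α = 1` and `α = 0` bounds both averages `∑ λ* (p - L̲)` and `∑ λ* q`
by `min_Q [α* (p - L̲) + (1 - α*) q] ≤ Gap`. Jensen's inequality for `f` and `g` and `L̲ ≤ Opt`
then give the bounds at `ŷ = ∑ λ* y_pq`.
-/

open Finset

theorem Convex.exists_max_le_combo_of_isCompact {X : Set (ℝ × ℝ)} (hXc : Convex ℝ X)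
    (hXk : IsCompact X) (hXne : X.Nonempty) :
    ∃ c ∈ X, ∃ α ∈ Set.Icc (0 : ℝ) 1, ∀ x ∈ X, max c.1 c.2 ≤ α * x.1 + (1 - α) * x.2 := by
  have hconv (α : ℝ) : ConvexOn ℝ X fun x : ℝ × ℝ => α * x.1 + (1 - α) * x.2 :=
    (α • LinearMap.fst ℝ ℝ ℝ + (1 - α) • LinearMap.snd ℝ ℝ ℝ).convexOn hXc
  have hconc (x : ℝ × ℝ) : ConcaveOn ℝ (Set.Icc 0 1) fun α : ℝ => α * x.1 + (1 - α) * x.2 :=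
    (((LinearMap.id.smulRight (x.1 - x.2)).concaveOn (convex_Icc 0 1)).add_const x.2).congr
      fun α _ => by
        simp only [Pi.add_apply, LinearMap.smulRight_apply, LinearMap.id_apply, smul_eq_mul]
        ring
  obtain ⟨c, hc, α, hα, hsaddle⟩ := Sion.exists_isSaddlePointOn
    (f := fun x α => α * x.1 + (1 - α) * x.2) hXne hXc hXk
    (fun α _ => (Continuous.lowerSemicontinuous (by fun_prop)).lowerSemicontinuousOn _)
    (fun α _ => (hconv α).quasiconvexOn) (convex_Icc 0 1) (Set.nonempty_Icc.2 zero_le_one)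
    isCompact_Icc
    (fun x _ => (Continuous.upperSemicontinuous (by fun_prop)).upperSemicontinuousOn _)
    (fun x _ => (hconc x).quasiconcaveOn)
  refine ⟨c, hc, α, hα, fun x hx => max_le ?_ ?_⟩
  · simpa using hsaddle x hx 1 (Set.right_mem_Icc.2 zero_le_one)
  · simpa using hsaddle x hx 0 (Set.left_mem_Icc.2 zero_le_one)

theorem Finset.Nonempty.exists_weights_max_le_combo {S : Finset (ℝ × ℝ)} (hS : S.Nonempty) :
    ∃ w : ℝ × ℝ → ℝ, (∀ x ∈ S, 0 ≤ w x) ∧ ∑ x ∈ S, w x = 1 ∧ ∃ α ∈ Set.Icc (0 : ℝ) 1, ∀ x ∈ S,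
      max (∑ y ∈ S, w y • y).1 (∑ y ∈ S, w y • y).2 ≤ α * x.1 + (1 - α) * x.2 := by
  obtain ⟨c, hc, α, hα, hle⟩ :=
    (convex_convexHull ℝ (S : Set (ℝ × ℝ))).exists_max_le_combo_of_isCompact
      (S.finite_toSet.isCompact_convexHull (𝕜 := ℝ)) (convexHull_nonempty_iff.2 hS)
  obtain ⟨w, hw₀, hw₁, rfl⟩ := Finset.mem_convexHull'.1 hc
  exact ⟨w, hw₀, hw₁, α, hα, fun x hx => hle x (subset_convexHull ℝ _ hx)⟩

theorem Finset.Nonempty.inf'_combo_le_sSup {ι : Type*} {s : Finset ι} (hs : s.Nonempty)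
    (a b : ι → ℝ) {α : ℝ} (hα : α ∈ Set.Icc 0 1) :
    s.inf' hs (fun i => α * a i + (1 - α) * b i) ≤
      sSup {r | ∃ β ∈ Set.Icc (0 : ℝ) 1, r = s.inf' hs (fun i => β * a i + (1 - β) * b i)} := by
  obtain ⟨i, hi⟩ := hs
  refine le_csSup ⟨max (a i) (b i), ?_⟩ ⟨α, hα, rfl⟩
  rintro _ ⟨β, hβ, rfl⟩
  exact (inf'_le _ hi).trans
    (Convex.combo_le_max _ _ hβ.1 (sub_nonneg.2 hβ.2) (add_sub_cancel _ _))

theorem ConvexOn.map_sum_le_sum_of_le {𝕜 E ι : Type*} [Field 𝕜] [LinearOrder 𝕜]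
    [IsStrictOrderedRing 𝕜] [AddCommGroup E] [Module 𝕜 E] {s : Set E} {f : E → 𝕜}
    (hf : ConvexOn 𝕜 s f) {t : Finset ι} {w : ι → 𝕜} {y : ι → E} {p : ι → 𝕜}
    (hw₀ : ∀ i ∈ t, 0 ≤ w i) (hw₁ : ∑ i ∈ t, w i = 1) (hy : ∀ i ∈ t, y i ∈ s)
    (hp : ∀ i ∈ t, f (y i) ≤ p i) :
    f (∑ i ∈ t, w i • y i) ≤ ∑ i ∈ t, w i * p i :=
  (hf.map_sum_le hw₀ hw₁ hy).trans
    (sum_le_sum fun i hi => mul_le_mul_of_nonneg_left (hp i hi) (hw₀ i hi))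

theorem stmt16_general {E : Type*} [NormedAddCommGroup E] [NormedSpace ℝ E]
    (Y : Set E) (hYcv : Convex ℝ Y)
    (f g : E → ℝ) (hf : ConvexOn ℝ Y f) (hg : ConvexOn ℝ Y g)
    (Opt : ℝ)
    (Lb : ℝ) (hLb : Lb ≤ Opt)
    (Q : Finset (ℝ × ℝ)) (hQ : Q.Nonempty)
    (yq : ℝ × ℝ → E)
    (hyq : ∀ pq ∈ Q, yq pq ∈ Y ∧ f (yq pq) ≤ pq.1 ∧ g (yq pq) ≤ pq.2)
    (Gap : ℝ)
    (hGap : Gap = sSup {r : ℝ | ∃ α ∈ Set.Icc (0:ℝ) 1,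
        r = Q.inf' hQ (fun pq => α * (pq.1 - Lb) + (1 - α) * pq.2)}) :
    ∃ lam : ℝ × ℝ → ℝ, (∀ pq ∈ Q, 0 ≤ lam pq) ∧ (∑ pq ∈ Q, lam pq = 1) ∧
      (∑ pq ∈ Q, lam pq • yq pq) ∈ Y ∧
      f (∑ pq ∈ Q, lam pq • yq pq) ≤ Opt + Gap ∧
      g (∑ pq ∈ Q, lam pq • yq pq) ≤ Gap := by
  let e : ℝ × ℝ ↪ ℝ × ℝ := (Equiv.subRight ((Lb, 0) : ℝ × ℝ)).toEmbedding
  obtain ⟨w, hw₀, hw₁, α, hα, hle⟩ := (hQ.map (f := e)).exists_weights_max_le_combo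
  let lam := fun pq => w (e pq)
  have hlam₀ : ∀ pq ∈ Q, 0 ≤ lam pq := fun pq hpq => hw₀ _ (mem_map_of_mem e hpq)
  have hlam₁ : ∑ pq ∈ Q, lam pq = 1 := by rwa [sum_map] at hw₁
  have hgap : max (∑ pq ∈ Q, lam pq * (pq.1 - Lb)) (∑ pq ∈ Q, lam pq * pq.2) ≤ Gap := by
    rw [hGap]
    refine le_trans ?_ (hQ.inf'_combo_le_sSup (fun pq => pq.1 - Lb) Prod.snd hα)
    refine le_inf' _ _ fun pq hpq => ?_
    simpa [e, lam, sum_map, Prod.fst_sum, Prod.snd_sum] using hle (e pq) (mem_map_of_mem e hpq)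
  obtain ⟨hgap₁, hgap₂⟩ := max_le_iff.1 hgap
  have hmem : ∀ pq ∈ Q, yq pq ∈ Y := fun pq h => (hyq pq h).1
  refine ⟨lam, hlam₀, hlam₁, hYcv.sum_mem hlam₀ hlam₁ hmem, ?_, ?_⟩
  · have hf_le := hf.map_sum_le_sum_of_le hlam₀ hlam₁ hmem fun pq h => (hyq pq h).2.1
    have hshift : ∑ pq ∈ Q, lam pq * pq.1 = ∑ pq ∈ Q, lam pq * (pq.1 - Lb) + Lb := by
      simp [mul_sub, sum_sub_distrib, ← sum_mul, hlam₁]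
    linarith
  · exact (hg.map_sum_le_sum_of_le hlam₀ hlam₁ hmem fun pq h => (hyq pq h).2.2).trans hgap₂

theorem stmt16 {E : Type*} [NormedAddCommGroup E] [NormedSpace ℝ E]
    (Y : Set E) (hYcv : Convex ℝ Y) (hYcp : IsCompact Y) (hYne : Y.Nonempty)
    (f g : E → ℝ) (hf : ConvexOn ℝ Y f) (hg : ConvexOn ℝ Y g)
    (Opt : ℝ) (yopt : E) (hyopt : yopt ∈ Y) (hgopt : g yopt ≤ 0)
    (hfopt : f yopt = Opt)
    (hOpt : ∀ y ∈ Y, g y ≤ 0 → Opt ≤ f y)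
    (Lb : ℝ) (hLb : Lb ≤ Opt)
    (Q : Finset (ℝ × ℝ)) (hQ : Q.Nonempty)
    (yq : ℝ × ℝ → E)
    (hyq : ∀ pq ∈ Q, yq pq ∈ Y ∧ f (yq pq) ≤ pq.1 ∧ g (yq pq) ≤ pq.2)
    (Gap : ℝ)
    (hGap : Gap = sSup {r : ℝ | ∃ α ∈ Set.Icc (0:ℝ) 1,
        r = Q.inf' hQ (fun pq => α * (pq.1 - Lb) + (1 - α) * pq.2)}) :
    ∃ lam : ℝ × ℝ → ℝ, (∀ pq ∈ Q, 0 ≤ lam pq) ∧ (∑ pq ∈ Q, lam pq = 1) ∧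
      (∑ pq ∈ Q, lam pq • yq pq) ∈ Y ∧
      f (∑ pq ∈ Q, lam pq • yq pq) ≤ Opt + Gap ∧
      g (∑ pq ∈ Q, lam pq • yq pq) ≤ Gap :=
  stmt16_general Y hYcv f g hf hg Opt Lb hLb Q hQ yq hyq Gap hGap
end

section
/- (Gap bound within a stage) In the scheme for min_{y∈Y}{f(y): g(y)≤0}, suppose at step t of stage s the upper bound f̄_s^t = α_s f(y^{s,t}) + (1−α_s) g(y^{s,t}) for some y^{s,t} ∈ Y whose pair (f(y^{s,t}), g(y^{s,t})) is in the filter Q_{s,t}, and the lower bound f̲_{s,t} satisfies f̲_{s,t}/α_s ≤ Opt̲_{s,t} with f̄_s^t − f̲_{s,t} ≤ ε_t. If α_s lies in the middle third of the segment Δ_{s,t} = {α: h_{s,t}(α) ≥ 0}, then Gap(s,t) ≤ 3 h_{s,t}(α_s) ≤ 3(f̄_s^t − f̲_{s,t}) ≤ 3ε_t. -/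
/-!
If `c` lies in the middle third of `[a, b]` and `x ∈ [a, b]`, say `x < c`, then
`c = θ x + (1 - θ) b` with `θ ≥ 1/3`, so concavity and `h b ≥ 0` give `h c ≥ θ h x ≥ h x / 3`;
the case `x > c` is the mirror image. Off `[a, b]` the function is negative, hence the maximum
of `h` is at most `3 h c`.
-/

open Set

namespace ConcaveOn

variable {s : Set ℝ} {h : ℝ → ℝ}

lemma le_three_mul_of_lt {x y c : ℝ} (hh : ConcaveOn ℝ s h) (hx : x ∈ s) (hy : y ∈ s)
    (hx0 : 0 ≤ h x) (hy0 : 0 ≤ h y) (hxc : x < c) (hcy : 3 * c ≤ x + 2 * y) :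
    h x ≤ 3 * h c := by
  have hyx : 0 < y - x := by linarith
  set θ := (y - c) / (y - x)
  have hθ : 1 / 3 ≤ θ := by rw [le_div_iff₀ hyx]; linarith
  have hθ1 : θ ≤ 1 := by rw [div_le_one hyx]; linarith
  have hθmul : θ * (y - x) = y - c := div_mul_cancel₀ _ hyx.ne'
  have hcomb : θ • x + (1 - θ) • y = c := by
    simp only [smul_eq_mul]; linear_combination -hθmul
  have hconc := hh.2 hx hy (by linarith) (by linarith) (add_sub_cancel θ 1)
  rw [hcomb, smul_eq_mul, smul_eq_mul] at hconc
  nlinarith [mul_nonneg (sub_nonneg.2 hθ1) hy0, mul_le_mul_of_nonneg_right hθ hx0]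

lemma le_three_mul_of_mem_middleThird {a b c x : ℝ} (hh : ConcaveOn ℝ (Icc a b) h)
    (ha : 0 ≤ h a) (hb : 0 ≤ h b) (hc : c ∈ Icc (a + (b - a) / 3) (b - (b - a) / 3))
    (hx : x ∈ Icc a b) : h x ≤ 3 * h c := by
  obtain ⟨hac, hcb⟩ := hc
  have hab : a ≤ b := by linarith
  have hx0 : 0 ≤ h x := (le_min ha hb).trans <|
    hh.ge_on_segment (left_mem_Icc.2 hab) (right_mem_Icc.2 hab) (by rwa [segment_eq_Icc hab])
  rcases lt_trichotomy x c with hxc | rfl | hcx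
  · exact hh.le_three_mul_of_lt hx (right_mem_Icc.2 hab) hx0 hb hxc (by linarith [hx.1])
  · linarith
  · have hneg : ConcaveOn ℝ (Icc (-b) (-a)) (fun t => h (-t)) := by
      convert hh.comp_linearMap (-LinearMap.id) using 1 <;> ext t <;>
        simp [neg_le, le_neg, and_comm]
    have hx' : -x ∈ Icc (-b) (-a) := ⟨neg_le_neg hx.2, neg_le_neg hx.1⟩
    have := hneg.le_three_mul_of_lt hx' (right_mem_Icc.2 (neg_le_neg hab))
      (by simpa using hx0) (by simpa using ha) (neg_lt_neg hcx) (by linarith [hx.2])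
    simpa using this

lemma le_three_mul_of_superlevel_eq_Icc {a b c : ℝ} (hh : ConcaveOn ℝ s h)
    (hsup : {t ∈ s | 0 ≤ h t} = Icc a b) (hc : c ∈ Icc (a + (b - a) / 3) (b - (b - a) / 3))
    {x : ℝ} (hx : x ∈ s) : h x ≤ 3 * h c := by
  have hab : a ≤ b := by linarith [hc.1, hc.2]
  have hmem : ∀ t ∈ Icc a b, t ∈ s ∧ 0 ≤ h t := fun t ht => by rwa [← hsup] at ht
  have hIcc : ConcaveOn ℝ (Icc a b) h :=
    hh.subset (fun t ht => (hmem t ht).1) (convex_Icc a b)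
  have hc0 : 0 ≤ h c := (hmem c ⟨by linarith [hc.1], by linarith [hc.2]⟩).2
  by_cases hx0 : 0 ≤ h x
  · exact hIcc.le_three_mul_of_mem_middleThird (hmem a (left_mem_Icc.2 hab)).2
      (hmem b (right_mem_Icc.2 hab)).2 hc (hsup ▸ ⟨hx, hx0⟩)
  · linarith

end ConcaveOn

theorem stmt18_general (h : ℝ → ℝ) (a b : ℝ)
    (hconc : ConcaveOn ℝ (Set.Icc (0:ℝ) 1) h)
    (hΔ : {α ∈ Set.Icc (0:ℝ) 1 | 0 ≤ h α} = Set.Icc a b)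
    (αs : ℝ) (hmid : αs ∈ Set.Icc (a + (b - a)/3) (b - (b - a)/3))
    (fy gy OptLb fbar flb εt : ℝ)
    (hfbar : fbar = αs * fy + (1 - αs) * gy)
    (hhαs : h αs ≤ αs * (fy - OptLb) + (1 - αs) * gy)
    (hflb : flb ≤ αs * OptLb)
    (hεt : fbar - flb ≤ εt) :
    sSup (h '' Set.Icc (0:ℝ) 1) ≤ 3 * h αs ∧
    h αs ≤ fbar - flb ∧
    sSup (h '' Set.Icc (0:ℝ) 1) ≤ 3 * εt := by
  have hgap : sSup (h '' Icc (0:ℝ) 1) ≤ 3 * h αs :=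
    csSup_le ((nonempty_Icc.2 zero_le_one).image h) <| by
      rintro _ ⟨x, hx, rfl⟩
      exact hconc.le_three_mul_of_superlevel_eq_Icc hΔ hmid hx
  have hαs : h αs ≤ fbar - flb := by linarith
  exact ⟨hgap, hαs, by linarith⟩

theorem stmt18 (h : ℝ → ℝ) (a b : ℝ) (hab : a < b)
    (hsub : Set.Icc a b ⊆ Set.Icc (0:ℝ) 1)
    (hconc : ConcaveOn ℝ (Set.Icc (0:ℝ) 1) h)
    (hΔ : {α ∈ Set.Icc (0:ℝ) 1 | 0 ≤ h α} = Set.Icc a b)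
    (αs : ℝ) (hmid : αs ∈ Set.Icc (a + (b - a)/3) (b - (b - a)/3))
    (fy gy OptLb fbar flb εt : ℝ)
    (hfbar : fbar = αs * fy + (1 - αs) * gy)
    (hhαs : h αs ≤ αs * (fy - OptLb) + (1 - αs) * gy)
    (hflb : flb ≤ αs * OptLb)
    (hεt : fbar - flb ≤ εt) :
    sSup (h '' Set.Icc (0:ℝ) 1) ≤ 3 * h αs ∧
    h αs ≤ fbar - flb ∧
    sSup (h '' Set.Icc (0:ℝ) 1) ≤ 3 * εt :=
  stmt18_general h a b hconc hΔ αs hmid fy gy OptLb fbar flb εt hfbar hhαs hflb hεt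
end
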